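/- arXiv:1803.03685 — 7 statements merged into one kernel-verified Lean document; each statement's English description precedes it below -/
import Mathlib

section
/- Let X ⊆ ℤ × ℤ be a finite set of crossings with type map t : ℤ × ℤ → Bool. There exists a height assignment h such that every crossing v ∈ X is resolved with respect to h if and only if (X, t) has no Celtic configuration. (This is the combinatorial core of the paper's main theorem: a lattice diagram of a knot or link is the projection of a proper lattice stick knot or link if and only if it does not contain a Celtic configuration, where a height assignment encodes the heights of the horizontal edges of a lattice stick link in the ℤ³ lattice projecting onto the diagram.) -/
/-!
Resolving a crossing is a family of strict inequalities between the heights of its four edges, so a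
resolving height assignment exists exactly when the digraph of these constraints on unit edges is
acyclic: ranking each edge by the number of its predecessors then resolves every crossing.

The four corners of a Celtic configuration force the four sides of their square into a cycle.
Conversely, every edge on a cycle is low at one endpoint and high at the other, and both endpoints
have opposite types. Hence each crossing where a cycle turns has, among such crossings, an
opposite-type neighbour both vertically and horizontally, and the one minimising `x + y`, then
`-x`, is the lower-left corner of a Celtic configuration.
-/

/-- Two points of the ℤ² lattice are adjacent if they differ by a unit vector. -/
def Adjacent (p q : ℤ × ℤ) : Prop :=
  p - q = (1, 0) ∨ p - q = (-1, 0) ∨ p - q = (0, 1) ∨ p - q = (0, -1)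

/-- Two vectors in ℤ × ℤ are perpendicular if their dot product vanishes. -/
def Perp (a b : ℤ × ℤ) : Prop := a.1 * b.1 + a.2 * b.2 = 0

lemma adjacent_symm {p q : ℤ × ℤ} (h : Adjacent p q) : Adjacent q p := by
  simp only [Adjacent, Prod.ext_iff, Prod.fst_sub, Prod.snd_sub] at h ⊢
  omega

/-- A Celtic configuration in `(X, t)` based at `p`. -/
def IsCeltic (X : Set (ℤ × ℤ)) (t : ℤ × ℤ → Bool) (p : ℤ × ℤ) : Prop :=
  p ∈ X ∧ p + (1, 0) ∈ X ∧ p + (0, 1) ∈ X ∧ p + (1, 1) ∈ X ∧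
    t p = t (p + (1, 1)) ∧ t (p + (1, 0)) = t (p + (0, 1)) ∧ t p ≠ t (p + (1, 0))

/-- A crossing `v` is resolved with respect to the height assignment `h`. -/
def Resolved (t : ℤ × ℤ → Bool) (h : ℤ × ℤ → ℤ × ℤ → ℤ) (v : ℤ × ℤ) : Prop :=
  if t v then
    (h v (v + (0, 1)) < h v (v + (1, 0)) ∧ h v (v + (0, 1)) < h v (v - (1, 0)) ∧
     h v (v - (0, 1)) < h v (v + (1, 0)) ∧ h v (v - (0, 1)) < h v (v - (1, 0)))
  else
    (h v (v + (1, 0)) < h v (v + (0, 1)) ∧ h v (v + (1, 0)) < h v (v - (0, 1)) ∧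
     h v (v - (1, 0)) < h v (v + (0, 1)) ∧ h v (v - (1, 0)) < h v (v - (0, 1)))

/-- `v ∈ X` is a problem crossing: it has a pair of nearby neighbors in `X`,
both of the opposite crossing type. -/
def ProblemCrossing (X : Set (ℤ × ℤ)) (t : ℤ × ℤ → Bool) (v : ℤ × ℤ) : Prop :=
  v ∈ X ∧ ∃ a b : ℤ × ℤ, a ∈ X ∧ b ∈ X ∧ a ≠ b ∧ Adjacent a v ∧ Adjacent b v ∧
    Perp (a - v) (b - v) ∧ t a ≠ t v ∧ t b ≠ t v

/-- `w` is a bad neighbor of `v`. -/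
def BadNeighbor (X : Set (ℤ × ℤ)) (t : ℤ × ℤ → Bool) (v w : ℤ × ℤ) : Prop :=
  v ∈ X ∧ w ∈ X ∧ Adjacent w v ∧ t w ≠ t v ∧
    ∃ u : ℤ × ℤ, u ∈ X ∧ Adjacent u v ∧ Perp (u - v) (w - v) ∧ t u ≠ t v

/-- The problem crossing graph of `(X, t)`. -/
def ProblemGraph (X : Set (ℤ × ℤ)) (t : ℤ × ℤ → Bool) : SimpleGraph (ℤ × ℤ) where
  Adj v w := v ≠ w ∧ ProblemCrossing X t v ∧ ProblemCrossing X t w ∧ Adjacent v w ∧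
    BadNeighbor X t v w ∧ BadNeighbor X t w v
  symm := ⟨fun v w ⟨h1, h2, h3, h4, h5, h6⟩ => ⟨h1.symm, h3, h2, adjacent_symm h4, h6, h5⟩⟩
  loopless := ⟨fun v h => h.1 rfl⟩

open Relation

theorem Relation.exists_nat_rank_of_acyclic {α : Type*} {r : α → α → Prop}
    (hfin : {a | ∃ b, r a b}.Finite) (hacyc : ∀ a, ¬ TransGen r a a) :
    ∃ f : α → ℕ, ∀ a b, r a b → f a < f b := by
  refine ⟨fun b => {a | TransGen r a b}.ncard, fun a b hab => Set.ncard_lt_ncard ?_ ?_⟩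
  · refine ⟨fun x hx => hx.tail hab, fun hsub => hacyc a (hsub (TransGen.single hab))⟩
  · exact hfin.subset fun x hx => (TransGen.head'_iff.mp hx).imp fun _ h => h.1

theorem Relation.TransGen.exists_rel_transGen_self {α : Type*} {r : α → α → Prop} {a : α}
    (h : TransGen r a a) :
    (∃ b, r a b ∧ TransGen r b b) ∧ ∃ b, r b a ∧ TransGen r b b := by
  obtain ⟨b, hab, hba⟩ := TransGen.head'_iff.mp h
  obtain ⟨c, hac, hca⟩ := TransGen.tail'_iff.mp h
  exact ⟨⟨b, hab, TransGen.tail' hba hab⟩, ⟨c, hca, TransGen.head' hca hac⟩⟩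

theorem adjacent_iff {a v : ℤ × ℤ} :
    Adjacent a v ↔ a = v + (1, 0) ∨ a = v - (1, 0) ∨ a = v + (0, 1) ∨ a = v - (0, 1) := by
  simp only [Adjacent, Prod.ext_iff, Prod.fst_sub, Prod.snd_sub, Prod.fst_add, Prod.snd_add]
  omega

/-- The edge from `v` to its neighbour `a` lies on the lower strand at `v`; `a.1 = v.1` says the
edge is vertical, which is the lower strand at an x-crossing. -/
def IsLow (t : ℤ × ℤ → Bool) (v a : ℤ × ℤ) : Prop := (t v = true ↔ a.1 = v.1)

theorem resolved_iff {t : ℤ × ℤ → Bool} {h : ℤ × ℤ → ℤ × ℤ → ℤ} {v : ℤ × ℤ} :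
    Resolved t h v ↔ ∀ a b, Adjacent a v → Adjacent b v → IsLow t v a → ¬ IsLow t v b →
      h v a < h v b := by
  constructor
  · intro hv a b ha hb hla hlb
    rw [adjacent_iff] at ha hb
    rcases ha with rfl | rfl | rfl | rfl <;> rcases hb with rfl | rfl | rfl | rfl <;>
      cases htv : t v <;> simp_all [Resolved, IsLow]
  · intro hv
    unfold Resolved
    cases htv : t v <;> simp only [Bool.false_eq_true, if_true, if_false] <;>
      refine ⟨hv _ _ ?_ ?_ ?_ ?_, hv _ _ ?_ ?_ ?_ ?_, hv _ _ ?_ ?_ ?_ ?_, hv _ _ ?_ ?_ ?_ ?_⟩ <;>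
      simp [adjacent_iff, IsLow, htv]

/-- Every height assignment resolving the crossings of `X` puts the edge `e` strictly below `e'`. -/
def ForcedBelow (X : Set (ℤ × ℤ)) (t : ℤ × ℤ → Bool) (e e' : Sym2 (ℤ × ℤ)) : Prop :=
  ∃ v ∈ X, ∃ a b, Adjacent a v ∧ Adjacent b v ∧ IsLow t v a ∧ ¬ IsLow t v b ∧
    e = s(v, a) ∧ e' = s(v, b)

theorem finite_setOf_forcedBelow {X : Set (ℤ × ℤ)} (hX : X.Finite) (t : ℤ × ℤ → Bool) :
    {e | ∃ e', ForcedBelow X t e e'}.Finite := by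
  let D : Set (ℤ × ℤ) := {(1, 0), (-1, 0), (0, 1), (0, -1)}
  refine ((hX.image2 (fun v d => s(v, v + d)) (Set.toFinite D))).subset ?_
  rintro _ ⟨_, v, hv, a, -, ha, -, -, -, rfl, -⟩
  exact ⟨v, hv, a - v, by simpa [D, Adjacent] using ha, by simp⟩

theorem exists_resolving_iff_acyclic {X : Set (ℤ × ℤ)} (hX : X.Finite) (t : ℤ × ℤ → Bool) :
    (∃ h : ℤ × ℤ → ℤ × ℤ → ℤ, (∀ p q, h p q = h q p) ∧ ∀ v ∈ X, Resolved t h v) ↔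
      ∀ e, ¬ TransGen (ForcedBelow X t) e e := by
  constructor
  · rintro ⟨h, hsymm, hres⟩ e he
    have hmono : ∀ e e', ForcedBelow X t e e' →
        Sym2.lift ⟨h, hsymm⟩ e < Sym2.lift ⟨h, hsymm⟩ e' := by
      rintro _ _ ⟨v, hv, a, b, ha, hb, hla, hlb, rfl, rfl⟩
      exact resolved_iff.mp (hres v hv) a b ha hb hla hlb
    have := he.lift _ hmono
    rw [transGen_eq_self] at this
    exact lt_irrefl _ this
  · intro hacyc
    obtain ⟨f, hf⟩ := exists_nat_rank_of_acyclic (finite_setOf_forcedBelow hX t) hacyc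
    refine ⟨fun p q => f s(p, q), fun p q => by simp only [Sym2.eq_swap], fun v hv => ?_⟩
    exact resolved_iff.mpr fun a b ha hb hla hlb =>
      Int.ofNat_lt.mpr (hf _ _ ⟨v, hv, a, b, ha, hb, hla, hlb, rfl, rfl⟩)

theorem IsCeltic.exists_transGen_forcedBelow {X : Set (ℤ × ℤ)} {t : ℤ × ℤ → Bool} {p : ℤ × ℤ}
    (hp : IsCeltic X t p) : ∃ e, TransGen (ForcedBelow X t) e e := by
  obtain ⟨hp, hq, hs, hr, htr, hts, htq⟩ := hp
  set q := p + (1, 0)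
  set r := p + (1, 1)
  set s := p + (0, 1)
  replace htq : t q = !t p := Bool.eq_not.mpr htq.symm
  rw [htq] at hts
  have forced : ∀ v ∈ X, ∀ a b, Adjacent a v → Adjacent b v → IsLow t v a → ¬ IsLow t v b →
      ForcedBelow X t s(v, a) s(v, b) := fun v hv a b ha hb hla hlb =>
    ⟨v, hv, a, b, ha, hb, hla, hlb, rfl, rfl⟩
  cases htp : t p
  · have h1 := forced p hp q s
    have h2 := forced s hs p r
    have h3 := forced r hr s q
    have h4 := forced q hq r p
    rw [Sym2.eq_swap (a := s)] at h2
    rw [Sym2.eq_swap (a := r)] at h3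
    rw [Sym2.eq_swap (a := q), Sym2.eq_swap (a := q) (b := p)] at h4
    refine ⟨_, .head (h1 ?_ ?_ ?_ ?_) (.head (h2 ?_ ?_ ?_ ?_) (.head (h3 ?_ ?_ ?_ ?_)
      (.single (h4 ?_ ?_ ?_ ?_))))⟩ <;>
    simp [q, r, s, Adjacent, IsLow, Prod.ext_iff, ← htr, ← hts, htq, htp]
  · have h1 := forced p hp s q
    have h2 := forced q hq p r
    have h3 := forced r hr q s
    have h4 := forced s hs r p
    rw [Sym2.eq_swap (a := q)] at h2
    rw [Sym2.eq_swap (a := r)] at h3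
    rw [Sym2.eq_swap (a := s), Sym2.eq_swap (a := s) (b := p)] at h4
    refine ⟨_, .head (h1 ?_ ?_ ?_ ?_) (.head (h2 ?_ ?_ ?_ ?_) (.head (h3 ?_ ?_ ?_ ?_)
      (.single (h4 ?_ ?_ ?_ ?_))))⟩ <;>
    simp [q, r, s, Adjacent, IsLow, Prod.ext_iff, ← htr, ← hts, htq, htp]

theorem exists_isCeltic_of_opposite_neighbors {X W : Set (ℤ × ℤ)} {t : ℤ × ℤ → Bool}
    (hWX : W ⊆ X) (hW : W.Finite) (hne : W.Nonempty)
    (hnbr : ∀ w ∈ W, (∃ a ∈ W, Adjacent a w ∧ a.1 = w.1 ∧ t a ≠ t w) ∧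
      ∃ b ∈ W, Adjacent b w ∧ b.1 ≠ w.1 ∧ t b ≠ t w) :
    ∃ p, IsCeltic X t p := by
  obtain ⟨w, hw, hmin⟩ := Set.exists_min_image W (fun v => toLex (v.1 + v.2, -v.1)) hW hne
  simp only [Prod.Lex.toLex_le_toLex] at hmin
  obtain ⟨⟨a, haW, ha, ha1, hta⟩, b, hbW, hb, hb1, htb⟩ := hnbr w hw
  obtain ⟨⟨c, hcW, hc, hc1, htc⟩, -⟩ := hnbr b hbW
  simp only [Adjacent, Prod.ext_iff, Prod.fst_sub, Prod.snd_sub] at ha hb hc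
  have := hmin a haW
  have := hmin b hbW
  have := hmin c hcW
  -- minimality of `w` excludes `w - (0, 1)`, `w - (1, 0)` and `w + (1, -1)`
  obtain rfl : a = w + (0, 1) := Prod.ext (by simp; omega) (by simp; omega)
  obtain rfl : b = w + (1, 0) := Prod.ext (by simp; omega) (by simp; omega)
  obtain rfl : c = w + (1, 1) := Prod.ext (by simp; omega) (by simp; omega)
  replace hta := Bool.eq_not.mpr hta
  replace htb := Bool.eq_not.mpr htb
  replace htc := Bool.eq_not.mpr htc
  exact ⟨w, hWX hw, hWX hbW, hWX haW, hWX hcW, by simp [htb, htc], by rw [hta, htb],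
    by simp [htb]⟩

theorem eq_of_isLow_of_not_isLow {t : ℤ × ℤ → Bool} {w a u c : ℤ × ℤ} (h : s(w, a) = s(u, c))
    (hwa : IsLow t w a) (huc : ¬ IsLow t u c) : u = a ∧ c = w := by
  rcases Sym2.eq_iff.mp h with ⟨rfl, rfl⟩ | ⟨rfl, rfl⟩
  · exact absurd hwa huc
  · exact ⟨rfl, rfl⟩

theorem ne_of_isLow_of_not_isLow {t : ℤ × ℤ → Bool} {v a : ℤ × ℤ} (hva : IsLow t v a)
    (hav : ¬ IsLow t a v) : t a ≠ t v := fun h => hav (by rw [IsLow, h]; exact hva.trans eq_comm)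

theorem exists_isCeltic_of_transGen_forcedBelow {X : Set (ℤ × ℤ)} (hX : X.Finite)
    {t : ℤ × ℤ → Bool} {e : Sym2 (ℤ × ℤ)} (he : TransGen (ForcedBelow X t) e e) :
    ∃ p, IsCeltic X t p := by
  set C := {x | TransGen (ForcedBelow X t) x x}
  -- `C` holds the edges on cycles, `W` the crossings where such a cycle turns
  set W := {w ∈ X | ∃ a b, Adjacent a w ∧ Adjacent b w ∧ IsLow t w a ∧ ¬ IsLow t w b ∧
    s(w, a) ∈ C ∧ s(w, b) ∈ C}
  have low_mem : ∀ w a, IsLow t w a → s(w, a) ∈ C → a ∈ W ∧ t a ≠ t w := by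
    intro w a hwa hC
    obtain ⟨z, ⟨u, hu, d, c, hd, hc, hud, huc, rfl, hx⟩, hz⟩ := hC.exists_rel_transGen_self.2
    obtain ⟨hua, hcw⟩ := eq_of_isLow_of_not_isLow hx hwa huc
    subst u c
    exact ⟨⟨hu, d, w, hd, hc, hud, huc, hz, Sym2.eq_swap ▸ hC⟩,
      ne_of_isLow_of_not_isLow hwa huc⟩
  have high_mem : ∀ w b, ¬ IsLow t w b → s(w, b) ∈ C → b ∈ W ∧ t b ≠ t w := by
    intro w b hwb hC
    obtain ⟨z, ⟨u, hu, c, d, hc, hd, huc, hud, hx, rfl⟩, hz⟩ := hC.exists_rel_transGen_self.1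
    obtain ⟨hwc, hbu⟩ := eq_of_isLow_of_not_isLow hx.symm huc hwb
    subst u c
    exact ⟨⟨hu, w, d, hc, hd, huc, hud, Sym2.eq_swap ▸ hC, hz⟩,
      (ne_of_isLow_of_not_isLow huc hwb).symm⟩
  have hWX : W ⊆ X := Set.sep_subset X _
  refine exists_isCeltic_of_opposite_neighbors hWX (hX.subset hWX) ?_ ?_
  · obtain ⟨_, ⟨v, hv, a, b, ha, hb, hla, hlb, rfl, rfl⟩, hC⟩ := he.exists_rel_transGen_self.1
    exact ⟨v, hv, a, b, ha, hb, hla, hlb, he, hC⟩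
  · rintro w ⟨-, a, b, ha, hb, hla, hlb, haC, hbC⟩
    obtain ⟨haW, hta⟩ := low_mem w a hla haC
    obtain ⟨hbW, htb⟩ := high_mem w b hlb hbC
    have hab : a.1 = w.1 ↔ b.1 ≠ w.1 := by unfold IsLow at hla hlb; tauto
    by_cases ha1 : a.1 = w.1
    · exact ⟨⟨a, haW, ha, ha1, hta⟩, b, hbW, hb, hab.mp ha1, htb⟩
    · exact ⟨⟨b, hbW, hb, not_not.mp (mt hab.mpr ha1), htb⟩, a, haW, ha, ha1, hta⟩

/-- **Main theorem (combinatorial core).** For a finite set of crossings `X` with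
type map `t`, there is a (symmetric) height assignment resolving every crossing
of `X` if and only if `(X, t)` has no Celtic configuration. -/
theorem exists_resolving_height_iff_no_celtic
    (X : Set (ℤ × ℤ)) (hX : X.Finite) (t : ℤ × ℤ → Bool) :
    (∃ h : ℤ × ℤ → ℤ × ℤ → ℤ, (∀ p q, h p q = h q p) ∧ ∀ v ∈ X, Resolved t h v) ↔
      ¬ ∃ p : ℤ × ℤ, IsCeltic X t p := by
  rw [exists_resolving_iff_acyclic hX t]
  constructor
  · rintro hacyc ⟨p, hp⟩
    obtain ⟨e, he⟩ := hp.exists_transGen_forcedBelow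
    exact hacyc e he
  · rintro hno e he
    exact hno (exists_isCeltic_of_transGen_forcedBelow hX he)
end

section
/- Let X ⊆ ℤ × ℤ be a set of crossings with type map t : ℤ × ℤ → Bool, and suppose p is a Celtic configuration in (X, t). Then for every height assignment h, it is not the case that all four crossings p, p+(1,0), p+(0,1), p+(1,1) are resolved with respect to h. (This is the 'only if' direction of the main theorem: a lattice diagram containing a Celtic configuration is not the projection of a proper lattice stick knot or link, proved by deriving a cyclic chain of strict height inequalities around the configuration.) -/
/-! At an x-crossing both horizontal edges lie strictly above both vertical ones, at a y-crossing
the reverse. Around a Celtic square the crossing types alternate, so going around the square each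
of its four edges is forced strictly below the next (left < bottom < right < top < left), which is
impossible. It suffices to treat an x-crossing at `p`: flipping every crossing type and negating
every height preserves resolvedness. -/

section Resolved

variable {t : ℤ × ℤ → Bool} {h : ℤ × ℤ → ℤ × ℤ → ℤ} {v u w : ℤ × ℤ}

theorem Resolved.vertical_lt_horizontal (hv : Resolved t h v) (ht : t v = true)
    (hu : u = v + (0, 1) ∨ u = v - (0, 1)) (hw : w = v + (1, 0) ∨ w = v - (1, 0)) :
    h v u < h v w := by
  rw [Resolved, if_pos ht] at hv
  obtain ⟨h₁, h₂, h₃, h₄⟩ := hv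
  rcases hu with rfl | rfl <;> rcases hw with rfl | rfl <;> assumption

theorem Resolved.horizontal_lt_vertical (hv : Resolved t h v) (ht : t v = false)
    (hu : u = v + (0, 1) ∨ u = v - (0, 1)) (hw : w = v + (1, 0) ∨ w = v - (1, 0)) :
    h v w < h v u := by
  rw [Resolved, if_neg (by simp [ht])] at hv
  obtain ⟨h₁, h₂, h₃, h₄⟩ := hv
  rcases hu with rfl | rfl <;> rcases hw with rfl | rfl <;> assumption

theorem resolved_not_neg_iff :
    Resolved (fun v ↦ !t v) (fun a b ↦ -h a b) v ↔ Resolved t h v := by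
  cases ht : t v <;> simp [Resolved, ht] <;> tauto

end Resolved

theorem not_all_resolved_of_x_corner {t : ℤ × ℤ → Bool} {h : ℤ × ℤ → ℤ × ℤ → ℤ} {p : ℤ × ℤ}
    (hsym : ∀ a b, h a b = h b a) (h₀₀ : t p = true) (h₁₀ : t (p + (1, 0)) = false)
    (h₀₁ : t (p + (0, 1)) = false) (h₁₁ : t (p + (1, 1)) = true) :
    ¬ (Resolved t h p ∧ Resolved t h (p + (1, 0)) ∧ Resolved t h (p + (0, 1)) ∧
        Resolved t h (p + (1, 1))) := by
  rintro ⟨r₀₀, r₁₀, r₀₁, r₁₁⟩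
  have left_lt_bottom : h p (p + (0, 1)) < h p (p + (1, 0)) :=
    r₀₀.vertical_lt_horizontal h₀₀ (.inl rfl) (.inl rfl)
  have bottom_lt_right : h (p + (1, 0)) p < h (p + (1, 0)) (p + (1, 1)) :=
    r₁₀.horizontal_lt_vertical h₁₀ (.inl (by ext <;> simp)) (.inr (add_sub_cancel_right p _).symm)
  have right_lt_top : h (p + (1, 1)) (p + (1, 0)) < h (p + (1, 1)) (p + (0, 1)) :=
    r₁₁.vertical_lt_horizontal h₁₁ (.inr (by ext <;> simp)) (.inr (by ext <;> simp))
  have top_lt_left : h (p + (0, 1)) (p + (1, 1)) < h (p + (0, 1)) p :=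
    r₀₁.horizontal_lt_vertical h₀₁ (.inr (add_sub_cancel_right p _).symm) (.inl (by ext <;> simp))
  linarith [hsym p (p + (1, 0)), hsym p (p + (0, 1)), hsym (p + (1, 0)) (p + (1, 1)),
    hsym (p + (0, 1)) (p + (1, 1))]

theorem IsCeltic.corner_types {X : Set (ℤ × ℤ)} {t : ℤ × ℤ → Bool} {p : ℤ × ℤ}
    (hp : IsCeltic X t p) :
    t (p + (1, 0)) = !t p ∧ t (p + (0, 1)) = !t p ∧ t (p + (1, 1)) = t p := by
  obtain ⟨-, -, -, -, h₁₁, h₁₀₀₁, hne⟩ := hp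
  have h₁₀ : t (p + (1, 0)) = !t p := by cases htp : t p <;> simp_all
  exact ⟨h₁₀, h₁₀₀₁ ▸ h₁₀, h₁₁.symm⟩

/-- If `p` is a Celtic configuration in `(X, t)`, then no height assignment
resolves all four crossings of the configuration. -/
theorem celtic_not_all_resolved
    (X : Set (ℤ × ℤ)) (t : ℤ × ℤ → Bool) (p : ℤ × ℤ) (hp : IsCeltic X t p)
    (h : ℤ × ℤ → ℤ × ℤ → ℤ) (hsym : ∀ a b, h a b = h b a) :
    ¬ (Resolved t h p ∧ Resolved t h (p + (1, 0)) ∧ Resolved t h (p + (0, 1)) ∧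
        Resolved t h (p + (1, 1))) := by
  obtain ⟨h₁₀, h₀₁, h₁₁⟩ := hp.corner_types
  cases htp : t p
  · simp only [← resolved_not_neg_iff (t := t) (h := h)]
    exact not_all_resolved_of_x_corner (by simp [hsym]) (by simp [htp]) (by simp [h₁₀, htp])
      (by simp [h₀₁, htp]) (by simp [h₁₁, htp])
  · exact not_all_resolved_of_x_corner hsym htp (by simp [h₁₀, htp]) (by simp [h₀₁, htp])
      (by simp [h₁₁, htp])
end

section
/- Let X ⊆ ℤ × ℤ be a set of crossings with type map t : ℤ × ℤ → Bool, and let c, d ∈ X be adjacent problem crossings. Then exactly one of the following holds: either t c = t d and neither of c, d is a bad neighbor of the other, or t c ≠ t d and each of c, d is a bad neighbor of the other. -/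
lemma perp_or_perp_of_adjacent {a b w v : ℤ × ℤ} (ha : Adjacent a v) (hb : Adjacent b v)
    (hab : Perp (a - v) (b - v)) (hw : Adjacent w v) :
    Perp (a - v) (w - v) ∨ Perp (b - v) (w - v) := by
  obtain ha | ha | ha | ha := ha <;> obtain hb | hb | hb | hb := hb <;>
    obtain hw | hw | hw | hw := hw <;> simp_all [Perp]

lemma BadNeighbor.type_ne {X : Set (ℤ × ℤ)} {t : ℤ × ℤ → Bool} {v w : ℤ × ℤ}
    (h : BadNeighbor X t v w) : t w ≠ t v :=
  h.2.2.2.1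

lemma ProblemCrossing.badNeighbor {X : Set (ℤ × ℤ)} {t : ℤ × ℤ → Bool} {v w : ℤ × ℤ}
    (hv : ProblemCrossing X t v) (hwX : w ∈ X) (hw : Adjacent w v) (htw : t w ≠ t v) :
    BadNeighbor X t v w := by
  obtain ⟨hvX, a, b, haX, hbX, -, ha, hb, hab, hta, htb⟩ := hv
  refine ⟨hvX, hwX, hw, htw, ?_⟩
  rcases perp_or_perp_of_adjacent ha hb hab hw with h | h
  · exact ⟨a, haX, ha, h, hta⟩
  · exact ⟨b, hbX, hb, h, htb⟩

/-- Two adjacent problem crossings either have the same crossing type and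
neither is a bad neighbor of the other, or have opposite crossing types and
each is a bad neighbor of the other; exactly one of these alternatives holds. -/
theorem adjacent_problem_crossings_dichotomy
    (X : Set (ℤ × ℤ)) (t : ℤ × ℤ → Bool) (c d : ℤ × ℤ)
    (hc : ProblemCrossing X t c) (hd : ProblemCrossing X t d) (hadj : Adjacent c d) :
    Xor' (t c = t d ∧ ¬ BadNeighbor X t c d ∧ ¬ BadNeighbor X t d c)
      (t c ≠ t d ∧ BadNeighbor X t c d ∧ BadNeighbor X t d c) := by
  by_cases heq : t c = t d
  · exact Or.inl ⟨⟨heq, fun h => h.type_ne heq.symm, fun h => h.type_ne heq⟩, fun h => h.1 heq⟩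
  · exact Or.inr ⟨⟨heq, hc.badNeighbor hd.1 (adjacent_symm hadj) (Ne.symm heq),
      hd.badNeighbor hc.1 hadj heq⟩, fun h => heq h.1⟩
end

section
/- Let X ⊆ ℤ × ℤ be a set of crossings with type map t : ℤ × ℤ → Bool. If (X, t) has no Celtic configuration, then the problem crossing graph of (X, t) is deleted-square free: there is no unit square in the ℤ² lattice three of whose four sides are edges of the problem crossing graph. -/
/-!
Every edge of the problem crossing graph joins two crossings of opposite types. Three sides of
a unit square form a path through all four corners, so the types alternate along it: opposite
corners share a type and adjacent corners do not, which is a Celtic configuration.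
-/

lemma Bool.eq_of_ne_of_ne {a b c : Bool} (hab : a ≠ b) (hbc : b ≠ c) : a = c := by
  cases a <;> cases b <;> cases c <;> simp_all

lemma Bool.ne_of_ne_of_ne_of_ne {a b c d : Bool} (hab : a ≠ b) (hbc : b ≠ c) (hcd : c ≠ d) :
    a ≠ d := by
  cases a <;> cases b <;> cases c <;> cases d <;> simp_all

section

variable {X : Set (ℤ × ℤ)} {t : ℤ × ℤ → Bool} {v w : ℤ × ℤ}

lemma problemGraph_adj_mem (h : (ProblemGraph X t).Adj v w) : v ∈ X := h.2.1.1

lemma problemGraph_adj_type_ne (h : (ProblemGraph X t).Adj v w) : t v ≠ t w :=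
  h.2.2.2.2.1.2.2.2.1.symm

lemma isCeltic_of_type_ne {p : ℤ × ℤ}
    (hp : p ∈ X) (hp₁₀ : p + (1, 0) ∈ X) (hp₀₁ : p + (0, 1) ∈ X) (hp₁₁ : p + (1, 1) ∈ X)
    (h₁₀ : t p ≠ t (p + (1, 0))) (h₀₁ : t p ≠ t (p + (0, 1)))
    (h₁₁ : t (p + (1, 0)) ≠ t (p + (1, 1))) :
    IsCeltic X t p :=
  ⟨hp, hp₁₀, hp₀₁, hp₁₁, Bool.eq_of_ne_of_ne h₁₀ h₁₁, Bool.eq_of_ne_of_ne h₁₀.symm h₀₁, h₁₀⟩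

end

/-- If `(X, t)` has no Celtic configuration, then the problem crossing graph is
deleted-square free: no unit square has three of its four sides as edges. -/
theorem problemGraph_deleted_square_free
    (X : Set (ℤ × ℤ)) (t : ℤ × ℤ → Bool)
    (hcc : ¬ ∃ p : ℤ × ℤ, IsCeltic X t p) :
    ¬ ∃ p : ℤ × ℤ,
      ((ProblemGraph X t).Adj p (p + (1, 0)) ∧ (ProblemGraph X t).Adj p (p + (0, 1)) ∧
        (ProblemGraph X t).Adj (p + (1, 0)) (p + (1, 1))) ∨
      ((ProblemGraph X t).Adj p (p + (1, 0)) ∧ (ProblemGraph X t).Adj p (p + (0, 1)) ∧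
        (ProblemGraph X t).Adj (p + (0, 1)) (p + (1, 1))) ∨
      ((ProblemGraph X t).Adj p (p + (1, 0)) ∧ (ProblemGraph X t).Adj (p + (1, 0)) (p + (1, 1)) ∧
        (ProblemGraph X t).Adj (p + (0, 1)) (p + (1, 1))) ∨
      ((ProblemGraph X t).Adj p (p + (0, 1)) ∧ (ProblemGraph X t).Adj (p + (1, 0)) (p + (1, 1)) ∧
        (ProblemGraph X t).Adj (p + (0, 1)) (p + (1, 1))) := by
  have mem := @problemGraph_adj_mem X t
  have ne := @problemGraph_adj_type_ne X t
  rintro ⟨p, hsq⟩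
  refine hcc ⟨p, ?_⟩
  -- `hb`, `hl`, `hr`, `ht`: the bottom, left, right and top sides of the square at `p`
  rcases hsq with ⟨hb, hl, hr⟩ | ⟨hb, hl, ht⟩ | ⟨hb, hr, ht⟩ | ⟨hl, hr, ht⟩
  · exact isCeltic_of_type_ne (mem hb) (mem hb.symm) (mem hl.symm) (mem hr.symm)
      (ne hb) (ne hl) (ne hr)
  · exact isCeltic_of_type_ne (mem hb) (mem hb.symm) (mem hl.symm) (mem ht.symm)
      (ne hb) (ne hl) (Bool.ne_of_ne_of_ne_of_ne (ne hb.symm) (ne hl) (ne ht))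
  · exact isCeltic_of_type_ne (mem hb) (mem hb.symm) (mem ht) (mem hr.symm)
      (ne hb) (Bool.ne_of_ne_of_ne_of_ne (ne hb) (ne hr) (ne ht.symm)) (ne hr)
  · exact isCeltic_of_type_ne (mem hl) (mem hr) (mem hl.symm) (mem hr.symm)
      (Bool.ne_of_ne_of_ne_of_ne (ne hl) (ne ht) (ne hr.symm)) (ne hl) (ne hr)
end

section
/- Every deleted-square free lattice simple closed curve has a vertex that is not a corner. Precisely: let G be a nonempty finite connected simple graph on ℤ × ℤ whose edges join only adjacent points (so G is a subgraph of the ℤ² lattice) and in which every vertex has degree exactly 2. If G is deleted-square free (no unit square has three of its four sides as edges of G), then G has a vertex v whose two neighbors a, b satisfy that a − v and b − v are not perpendicular (equivalently, a − v = −(b − v)). -/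
/-- `v` has exactly two neighbors in `G` (degree exactly 2). -/
def DegreeTwo (G : SimpleGraph (ℤ × ℤ)) (v : ℤ × ℤ) : Prop :=
  ∃ a b : ℤ × ℤ, a ≠ b ∧ G.Adj v a ∧ G.Adj v b ∧ ∀ c : ℤ × ℤ, G.Adj v c → c = a ∨ c = b

/-- `v` is a corner of `G`: it has exactly two neighbors and they lie in
perpendicular directions from `v`. -/
def GraphCorner (G : SimpleGraph (ℤ × ℤ)) (v : ℤ × ℤ) : Prop :=
  ∃ a b : ℤ × ℤ, a ≠ b ∧ G.Adj v a ∧ G.Adj v b ∧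
    (∀ c : ℤ × ℤ, G.Adj v c → c = a ∨ c = b) ∧ Perp (a - v) (b - v)

def IsTopRight (s : Set (ℤ × ℤ)) (v : ℤ × ℤ) : Prop :=
  ∀ c ∈ s, c.2 < v.2 ∨ c.2 = v.2 ∧ c.1 ≤ v.1

lemma Set.Finite.exists_isTopRight {s : Set (ℤ × ℤ)} (hs : s.Finite) (hne : s.Nonempty) :
    ∃ v ∈ s, IsTopRight s v := by
  obtain ⟨v, hv, hmax⟩ := hs.exists_maximalFor (fun q : ℤ × ℤ => toLex (q.2, q.1)) s hne
  refine ⟨v, hv, fun c hc => ?_⟩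
  by_contra hlt
  have hvc : toLex (v.2, v.1) < toLex (c.2, c.1) := by
    rw [Prod.Lex.lt_iff, ofLex_toLex, ofLex_toLex]
    omega
  exact hvc.not_ge (hmax hc hvc.le)

lemma IsTopRight.snd_le {s : Set (ℤ × ℤ)} {v c : ℤ × ℤ} (hv : IsTopRight s v) (hc : c ∈ s) :
    c.2 ≤ v.2 := by
  rcases hv c hc with h | h <;> omega

lemma IsTopRight.eq_sub_of_adjacent {s : Set (ℤ × ℤ)} {v c : ℤ × ℤ} (hv : IsTopRight s v)
    (hc : c ∈ s) (hvc : Adjacent v c) : c = v - (1, 0) ∨ c = v - (0, 1) := by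
  have := hv c hc
  simp only [Adjacent, Prod.ext_iff, Prod.fst_sub, Prod.snd_sub] at hvc ⊢
  omega

lemma eq_add_or_sub_of_adjacent_of_perp {a w : ℤ × ℤ} (haw : Adjacent a w)
    (hperp : Perp (1, 0) (w - a)) : w = a + (0, 1) ∨ w = a - (0, 1) := by
  simp only [Adjacent, Perp, Prod.ext_iff, Prod.fst_sub, Prod.snd_sub, Prod.fst_add,
    Prod.snd_add] at haw hperp ⊢
  omega

lemma perp_comm {a b : ℤ × ℤ} : Perp a b ↔ Perp b a := by
  simp only [Perp, mul_comm]

lemma DegreeTwo.adj_and_adj {G : SimpleGraph (ℤ × ℤ)} {v x y : ℤ × ℤ} (hv : DegreeTwo G v)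
    (hxy : ∀ c, G.Adj v c → c = x ∨ c = y) : G.Adj v x ∧ G.Adj v y := by
  obtain ⟨a, b, hab, ha, hb, -⟩ := hv
  rcases hxy a ha with rfl | rfl <;> rcases hxy b hb with rfl | rfl
  exacts [absurd rfl hab, ⟨ha, hb⟩, ⟨hb, ha⟩, absurd rfl hab]

lemma GraphCorner.exists_adj_perp {G : SimpleGraph (ℤ × ℤ)} {v a : ℤ × ℤ} (hv : GraphCorner G v)
    (ha : G.Adj v a) : ∃ w, G.Adj v w ∧ Perp (a - v) (w - v) := by
  obtain ⟨b, c, -, hb, hc, hall, hperp⟩ := hv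
  rcases hall a ha with rfl | rfl
  exacts [⟨c, hc, hperp⟩, ⟨b, hb, perp_comm.mp hperp⟩]

theorem lattice_cycle_has_noncorner_general
    (G : SimpleGraph (ℤ × ℤ))
    (hlat : ∀ v w : ℤ × ℤ, G.Adj v w → Adjacent v w)
    (hne : G.support.Nonempty) (hfin : G.support.Finite)
    (hdeg : ∀ v ∈ G.support, DegreeTwo G v)
    (hsqfree : ¬ ∃ p : ℤ × ℤ,
      (G.Adj p (p + (1, 0)) ∧ G.Adj p (p + (0, 1)) ∧
        G.Adj (p + (1, 0)) (p + (1, 1))) ∨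
      (G.Adj p (p + (1, 0)) ∧ G.Adj p (p + (0, 1)) ∧
        G.Adj (p + (0, 1)) (p + (1, 1))) ∨
      (G.Adj p (p + (1, 0)) ∧ G.Adj (p + (1, 0)) (p + (1, 1)) ∧
        G.Adj (p + (0, 1)) (p + (1, 1))) ∨
      (G.Adj p (p + (0, 1)) ∧ G.Adj (p + (1, 0)) (p + (1, 1)) ∧
        G.Adj (p + (0, 1)) (p + (1, 1)))) :
    ∃ v ∈ G.support, ∃ a b : ℤ × ℤ, a ≠ b ∧ G.Adj v a ∧ G.Adj v b ∧
      (∀ c : ℤ × ℤ, G.Adj v c → c = a ∨ c = b) ∧ ¬ Perp (a - v) (b - v) := by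
  by_contra! hcon
  have hcorner : ∀ v ∈ G.support, GraphCorner G v := fun v hv =>
    let ⟨a, b, hab, ha, hb, hall⟩ := hdeg v hv
    ⟨a, b, hab, ha, hb, hall, hcon v hv a b hab ha hb hall⟩
  obtain ⟨v, hv, htop⟩ := hfin.exists_isTopRight hne
  obtain ⟨hleft, hdown⟩ := (hdeg v hv).adj_and_adj fun c hc =>
    htop.eq_sub_of_adjacent ⟨v, hc.symm⟩ (hlat v c hc)
  obtain ⟨w, hw, hperp⟩ := (hcorner _ ⟨v, hleft.symm⟩).exists_adj_perp hleft.symm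
  rw [sub_sub_cancel] at hperp
  rcases eq_add_or_sub_of_adjacent_of_perp (hlat _ w hw) hperp with rfl | rfl
  · exact absurd (htop.snd_le ⟨_, hw.symm⟩) (by simp)
  · refine hsqfree ⟨v - (1, 1), .inr <| .inr <| .inr ?_⟩
    have e₁ : v - (1, 1) + (0, 1) = v - (1, 0) := by ext <;> simp
    have e₂ : v - (1, 1) + (1, 0) = v - (0, 1) := by ext <;> simp
    have e₃ : v - (1, 1) + (1, 1) = v := by ext <;> simp
    have e₄ : v - (1, 0) - (0, 1) = v - (1, 1) := by ext <;> simp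
    rw [e₁, e₂, e₃, ← e₄]
    exact ⟨hw.symm, hdown.symm, hleft.symm⟩

/-- Every deleted-square free lattice simple closed curve has a vertex that is
not a corner: its two neighbors lie in non-perpendicular (i.e. opposite)
directions. -/
theorem lattice_cycle_has_noncorner
    (G : SimpleGraph (ℤ × ℤ))
    (hlat : ∀ v w : ℤ × ℤ, G.Adj v w → Adjacent v w)
    (hne : G.support.Nonempty) (hfin : G.support.Finite)
    (hdeg : ∀ v ∈ G.support, DegreeTwo G v)
    (hconn : ∀ v ∈ G.support, ∀ w ∈ G.support, G.Reachable v w)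
    (hsqfree : ¬ ∃ p : ℤ × ℤ,
      (G.Adj p (p + (1, 0)) ∧ G.Adj p (p + (0, 1)) ∧
        G.Adj (p + (1, 0)) (p + (1, 1))) ∨
      (G.Adj p (p + (1, 0)) ∧ G.Adj p (p + (0, 1)) ∧
        G.Adj (p + (0, 1)) (p + (1, 1))) ∨
      (G.Adj p (p + (1, 0)) ∧ G.Adj (p + (1, 0)) (p + (1, 1)) ∧
        G.Adj (p + (0, 1)) (p + (1, 1))) ∨
      (G.Adj p (p + (0, 1)) ∧ G.Adj (p + (1, 0)) (p + (1, 1)) ∧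
        G.Adj (p + (0, 1)) (p + (1, 1)))) :
    ∃ v ∈ G.support, ∃ a b : ℤ × ℤ, a ≠ b ∧ G.Adj v a ∧ G.Adj v b ∧
      (∀ c : ℤ × ℤ, G.Adj v c → c = a ∨ c = b) ∧ ¬ Perp (a - v) (b - v) :=
  lattice_cycle_has_noncorner_general G hlat hne hfin hdeg hsqfree
end

section
/- Let X ⊆ ℤ × ℤ be a set of crossings with type map t : ℤ × ℤ → Bool, and let v ∈ X be a crossing that is NOT a problem crossing. Then for every height assignment h there exists a height assignment h' and a direction d ∈ {(1,0), (0,1)} such that: h' agrees with h on all unit edges except possibly the two edges joining v to v + d and to v − d, on which h' takes a single common value; v is resolved with respect to h'; and every crossing of X that is resolved with respect to h is still resolved with respect to h'. (This is Observation (2) in the proof of the main theorem: at a non-problem crossing a backwards compatible proper lift always exists.) -/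
def overAxis (b : Bool) : ℤ × ℤ := if b then (1, 0) else (0, 1)

lemma overAxis_not_ne (b : Bool) : overAxis (!b) ≠ overAxis b := by
  cases b <;> decide

lemma overAxis_ne_neg (a b : Bool) : overAxis a ≠ -overAxis b := by
  cases a <;> cases b <;> decide

lemma eq_overAxis_or_eq_overAxis_not {d : ℤ × ℤ} (hd : d = (1, 0) ∨ d = (0, 1)) (b : Bool) :
    d = overAxis b ∨ d = overAxis (!b) := by
  cases b <;> rcases hd with rfl | rfl <;> simp [overAxis]

section Resolved

variable {t : ℤ × ℤ → Bool} {h h' : ℤ × ℤ → ℤ × ℤ → ℤ} {w : ℤ × ℤ}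

lemma resolved_iff_s12 :
    Resolved t h w ↔
      max (h w (w + overAxis (!t w))) (h w (w - overAxis (!t w))) <
        min (h w (w + overAxis (t w))) (h w (w - overAxis (t w))) := by
  unfold Resolved overAxis
  cases t w <;> simp only [Bool.not_false, Bool.not_true, if_true, if_false,
    Bool.false_eq_true, max_lt_iff, lt_min_iff] <;> tauto

lemma Resolved.of_le (hres : Resolved t h w) (hle : ∀ q, h w q ≤ h' w q)
    (hadd : h' w (w + overAxis (!t w)) = h w (w + overAxis (!t w)))
    (hsub : h' w (w - overAxis (!t w)) = h w (w - overAxis (!t w))) :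
    Resolved t h' w := by
  rw [resolved_iff_s12] at hres ⊢
  rw [hadd, hsub]
  have := hle (w + overAxis (t w))
  have := hle (w - overAxis (t w))
  omega

lemma resolved_neg : Resolved t (-h) w ↔ Resolved (fun p => !t p) h w := by
  unfold Resolved
  cases htw : t w <;> simp only [htw, Pi.neg_apply, neg_lt_neg_iff, Bool.not_false,
    Bool.not_true, if_true, if_false, Bool.false_eq_true] <;> tauto

end Resolved

def updateAxis (h : ℤ × ℤ → ℤ × ℤ → ℤ) (v d : ℤ × ℤ) (c : ℤ) : ℤ × ℤ → ℤ × ℤ → ℤ :=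
  fun p q =>
    if (p = v ∧ q = v + d) ∨ (p = v + d ∧ q = v) ∨ (p = v ∧ q = v - d) ∨ (p = v - d ∧ q = v)
    then c else h p q

section updateAxis

variable {h : ℤ × ℤ → ℤ × ℤ → ℤ} {v d : ℤ × ℤ} {c : ℤ}

lemma updateAxis_symm (hsym : ∀ p q, h p q = h q p) (p q : ℤ × ℤ) :
    updateAxis h v d c p q = updateAxis h v d c q p := by
  unfold updateAxis
  split_ifs <;> first | rfl | exact hsym p q | tauto

lemma updateAxis_self_add : updateAxis h v d c v (v + d) = c :=
  if_pos (Or.inl ⟨rfl, rfl⟩)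

lemma updateAxis_self_sub : updateAxis h v d c v (v - d) = c :=
  if_pos (Or.inr (Or.inr (Or.inl ⟨rfl, rfl⟩)))

lemma updateAxis_of_ne {w : ℤ × ℤ} (hv : w ≠ v) (hadd : w ≠ v + d) (hsub : w ≠ v - d)
    (q : ℤ × ℤ) : updateAxis h v d c w q = h w q := by
  unfold updateAxis
  rw [if_neg]
  tauto

lemma updateAxis_add_of_ne {o : ℤ × ℤ} (hadd : o ≠ d) (hsub : o ≠ -d) (w : ℤ × ℤ) :
    updateAxis h v d c w (w + o) = h w (w + o) := by
  unfold updateAxis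
  rw [if_neg]
  intro hpq
  have ho : o = w + o - w := (add_sub_cancel_left w o).symm
  rcases hpq with ⟨hp, hq⟩ | ⟨hp, hq⟩ | ⟨hp, hq⟩ | ⟨hp, hq⟩ <;>
    rw [hq, hp] at ho <;> simp only [add_sub_cancel_left, sub_add_cancel_left,
      sub_sub_cancel_left, sub_sub_cancel] at ho <;> tauto

lemma updateAxis_sub_of_ne {o : ℤ × ℤ} (hadd : o ≠ d) (hsub : o ≠ -d) (w : ℤ × ℤ) :
    updateAxis h v d c w (w - o) = h w (w - o) := by
  simpa only [sub_eq_add_neg] using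
    updateAxis_add_of_ne (h := h) (c := c) (o := -o) (by rwa [ne_eq, neg_eq_iff_eq_neg])
      (by rwa [ne_eq, neg_inj]) w

lemma le_updateAxis (hsym : ∀ p q, h p q = h q p) (hadd : h v (v + d) ≤ c)
    (hsub : h v (v - d) ≤ c) (p q : ℤ × ℤ) : h p q ≤ updateAxis h v d c p q := by
  unfold updateAxis
  split_ifs with hpq
  · rcases hpq with ⟨rfl, rfl⟩ | ⟨rfl, rfl⟩ | ⟨rfl, rfl⟩ | ⟨rfl, rfl⟩ <;>
      first | assumption | rwa [hsym]
  · exact le_rfl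

lemma updateAxis_neg : updateAxis (-h) v d (-c) = -updateAxis h v d c := by
  funext p q
  simp only [updateAxis, Pi.neg_apply]
  split_ifs <;> rfl

end updateAxis

section Lift

variable {X : Set (ℤ × ℤ)} {t : ℤ × ℤ → Bool} {v d : ℤ × ℤ} {h : ℤ × ℤ → ℤ × ℤ → ℤ}

lemma exists_axis_of_not_problemCrossing (hv : v ∈ X) (hnp : ¬ ProblemCrossing X t v) :
    ∃ d : ℤ × ℤ, (d = (1, 0) ∨ d = (0, 1)) ∧
      ∀ w ∈ X, (w = v + d ∨ w = v - d) → t w = t v := by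
  by_contra! hcon
  obtain ⟨⟨a, haX, hav, hat⟩, ⟨b, hbX, hbv, hbt⟩⟩ :=
    And.intro (hcon (1, 0) (Or.inl rfl)) (hcon (0, 1) (Or.inr rfl))
  refine hnp ⟨hv, a, b, haX, hbX, ?_, ?_, ?_, ?_, hat, hbt⟩ <;>
    rcases hav with rfl | rfl <;> rcases hbv with rfl | rfl <;>
    simp [Adjacent, Perp, Prod.ext_iff]

lemma exists_resolving_updateAxis_of_eq_overAxis (hsym : ∀ p q, h p q = h q p)
    (hd : d = overAxis (t v))
    (hsame : ∀ w ∈ X, (w = v + d ∨ w = v - d) → t w = t v) :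
    ∃ c, Resolved t (updateAxis h v d c) v ∧
      ∀ w ∈ X, Resolved t h w → Resolved t (updateAxis h v d c) w := by
  set o := overAxis (!t v)
  have hod : o ≠ d := hd ▸ overAxis_not_ne _
  have hod' : o ≠ -d := hd ▸ overAxis_ne_neg _ _
  set c := max (max (h v (v + d)) (h v (v - d))) (max (h v (v + o)) (h v (v - o))) + 1
  have hle : ∀ p q, h p q ≤ updateAxis h v d c p q :=
    le_updateAxis hsym (by omega) (by omega)
  refine ⟨c, ?_, fun w hw hres => hres.of_le (hle w) ?_ ?_⟩
  · rw [resolved_iff_s12, ← hd, updateAxis_self_add, updateAxis_self_sub,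
      updateAxis_add_of_ne hod hod', updateAxis_sub_of_ne hod hod']
    omega
  all_goals
    by_cases htw : t w = t v
    · rw [htw]
      first | exact updateAxis_add_of_ne hod hod' w | exact updateAxis_sub_of_ne hod hod' w
    · refine updateAxis_of_ne (fun hwv => htw (by rw [hwv])) ?_ ?_ _ <;>
        intro hwv <;> exact htw (hsame w hw (by tauto))

lemma exists_resolving_updateAxis (hsym : ∀ p q, h p q = h q p) (hd : d = (1, 0) ∨ d = (0, 1))
    (hsame : ∀ w ∈ X, (w = v + d ∨ w = v - d) → t w = t v) :
    ∃ c, Resolved t (updateAxis h v d c) v ∧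
      ∀ w ∈ X, Resolved t h w → Resolved t (updateAxis h v d c) w := by
  rcases eq_overAxis_or_eq_overAxis_not hd (t v) with hover | hunder
  · exact exists_resolving_updateAxis_of_eq_overAxis hsym hover hsame
  -- Lowering the under-edges for `t` is raising the over-edges for `!t` and `-h`.
  obtain ⟨c, hcv, hc⟩ :=
    exists_resolving_updateAxis_of_eq_overAxis (X := X) (t := fun p => !t p) (h := -h)
    (fun p q => by simp only [Pi.neg_apply, hsym p q]) hunder
    (fun w hw hwv => by simp only [hsame w hw hwv])
  refine ⟨-c, ?_, fun w hw hres => ?_⟩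
  · rw [← neg_neg c, updateAxis_neg, resolved_neg] at hcv
    simpa using hcv
  · have := hc w hw (resolved_neg.mpr (by simpa using hres))
    rw [← neg_neg c, updateAxis_neg, resolved_neg] at this
    simpa using this

end Lift

/-- Observation (2): at a non-problem crossing `v`, for any height assignment
there is a backwards compatible proper lift: a new height assignment changing
only the two edges from `v` in some unit direction `d` (to a single common
value) which resolves `v` and keeps every previously resolved crossing
resolved. -/
theorem backwards_compatible_lift_at_non_problem
    (X : Set (ℤ × ℤ)) (t : ℤ × ℤ → Bool) (v : ℤ × ℤ) (hv : v ∈ X)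
    (hnp : ¬ ProblemCrossing X t v)
    (h : ℤ × ℤ → ℤ × ℤ → ℤ) (hsym : ∀ p q, h p q = h q p) :
    ∃ (h' : ℤ × ℤ → ℤ × ℤ → ℤ) (d : ℤ × ℤ),
      (d = (1, 0) ∨ d = (0, 1)) ∧
      (∀ p q, h' p q = h' q p) ∧
      (∃ c : ℤ, h' v (v + d) = c ∧ h' v (v - d) = c) ∧
      (∀ p q : ℤ × ℤ,
        ¬ ((p = v ∧ q = v + d) ∨ (p = v + d ∧ q = v) ∨
            (p = v ∧ q = v - d) ∨ (p = v - d ∧ q = v)) → h' p q = h p q) ∧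
      Resolved t h' v ∧
      (∀ w ∈ X, Resolved t h w → Resolved t h' w) := by
  obtain ⟨d, hd, hsame⟩ := exists_axis_of_not_problemCrossing hv hnp
  obtain ⟨c, hcv, hc⟩ := exists_resolving_updateAxis hsym hd hsame
  exact ⟨updateAxis h v d c, d, hd, updateAxis_symm hsym, ⟨c, updateAxis_self_add,
    updateAxis_self_sub⟩, fun p q hpq => if_neg hpq, hcv, hc⟩
end

section
/- Let X ⊆ ℤ × ℤ be a set of crossings with type map t : ℤ × ℤ → Bool, let v, w ∈ X be adjacent crossings with t v = t w, and let h be a height assignment with respect to which w is resolved. Then there exists N ∈ ℤ such that for all n ≥ N both of the following modified height assignments resolve v and leave w resolved: (a) the assignment obtained from h by setting the heights of the two edges joining v to v + (1,0) and to v − (1,0) equal to n if t v = true, and equal to −n if t v = false; (b) the assignment obtained from h by setting the heights of the two edges joining v to v + (0,1) and to v − (0,1) equal to −n if t v = true, and equal to n if t v = false. (This is Observation (1) in the proof of the main theorem: if two adjacent crossings have the same crossing type, then any proper lift at one of them with sufficiently large height in absolute value is compatible with the other.) -/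
/-- The height assignment obtained from `h` by setting the heights of the two
horizontal edges at `v` to `n` if `t v = true` and to `-n` otherwise. -/
def liftX (t : ℤ × ℤ → Bool) (h : ℤ × ℤ → ℤ × ℤ → ℤ) (v : ℤ × ℤ) (n : ℤ) :
    ℤ × ℤ → ℤ × ℤ → ℤ := fun p q =>
  if (p = v ∧ (q = v + (1, 0) ∨ q = v - (1, 0))) ∨
      (q = v ∧ (p = v + (1, 0) ∨ p = v - (1, 0))) then
    (if t v then n else -n)
  else h p q

/-- The height assignment obtained from `h` by setting the heights of the two
vertical edges at `v` to `-n` if `t v = true` and to `n` otherwise. -/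
def liftY (t : ℤ × ℤ → Bool) (h : ℤ × ℤ → ℤ × ℤ → ℤ) (v : ℤ × ℤ) (n : ℤ) :
    ℤ × ℤ → ℤ × ℤ → ℤ := fun p q =>
  if (p = v ∧ (q = v + (0, 1) ∨ q = v - (0, 1))) ∨
      (q = v ∧ (p = v + (0, 1) ∨ p = v - (0, 1))) then
    (if t v then -n else n)
  else h p q

/- A lift at `v` only touches the horizontal (for `liftX`) or vertical (for `liftY`) edges at
`v`, and the height it puts there is, at a crossing of `v`'s type, on the correct side of any
fixed height once `n` is large. So at `v`, and at any crossing of the same type, every edge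
height the lift touches still compares correctly with the untouched edges there. -/

def horizNbrs (u : ℤ × ℤ) : Set (ℤ × ℤ) := {u + (1, 0), u - (1, 0)}

def vertNbrs (u : ℤ × ℤ) : Set (ℤ × ℤ) := {u + (0, 1), u - (0, 1)}

theorem horizNbrs_finite (u : ℤ × ℤ) : (horizNbrs u).Finite :=
  (Set.finite_singleton _).insert _

theorem vertNbrs_finite (u : ℤ × ℤ) : (vertNbrs u).Finite :=
  (Set.finite_singleton _).insert _

/-- At a crossing of type `b`, a horizontal edge of height `x` and a vertical edge of height `y`
are stacked as the crossing requires. -/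
def CorrectOrder (b : Bool) (x y : ℤ) : Prop := if b then y < x else x < y

theorem resolved_iff_forall_correctOrder (t : ℤ × ℤ → Bool) (h : ℤ × ℤ → ℤ × ℤ → ℤ) (u : ℤ × ℤ) :
    Resolved t h u ↔
      ∀ a ∈ horizNbrs u, ∀ b ∈ vertNbrs u, CorrectOrder (t u) (h u a) (h u b) := by
  unfold Resolved
  cases t u <;> simp [CorrectOrder, horizNbrs, vertNbrs] <;> tauto

theorem correctOrder_ite_left_of_abs_lt (b : Bool) {y n : ℤ} (hy : |y| < n) :
    CorrectOrder b (if b then n else -n) y := by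
  cases b <;> simp only [CorrectOrder] <;> grind [abs_lt]

theorem correctOrder_ite_right_of_abs_lt (b : Bool) {x n : ℤ} (hx : |x| < n) :
    CorrectOrder b x (if b then -n else n) := by
  cases b <;> simp only [CorrectOrder] <;> grind [abs_lt]

theorem liftX_apply_eq_or (t : ℤ × ℤ → Bool) (h : ℤ × ℤ → ℤ × ℤ → ℤ) (v : ℤ × ℤ) (n : ℤ)
    (p q : ℤ × ℤ) :
    liftX t h v n p q = h p q ∨ liftX t h v n p q = if t v then n else -n := by
  unfold liftX
  split_ifs <;> simp

theorem liftY_apply_eq_or (t : ℤ × ℤ → Bool) (h : ℤ × ℤ → ℤ × ℤ → ℤ) (v : ℤ × ℤ) (n : ℤ)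
    (p q : ℤ × ℤ) :
    liftY t h v n p q = h p q ∨ liftY t h v n p q = if t v then -n else n := by
  unfold liftY
  split_ifs <;> simp

section Lift

variable {t : ℤ × ℤ → Bool} {h : ℤ × ℤ → ℤ × ℤ → ℤ} {u v a b : ℤ × ℤ} {n : ℤ}

theorem liftX_apply_self (ha : a ∈ horizNbrs v) :
    liftX t h v n v a = if t v then n else -n := by
  simp_all [liftX, horizNbrs]

theorem liftY_apply_self (hb : b ∈ vertNbrs v) :
    liftY t h v n v b = if t v then -n else n := by
  simp_all [liftY, vertNbrs]

theorem liftX_apply_of_mem_vertNbrs (hb : b ∈ vertNbrs u) : liftX t h v n u b = h u b := by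
  rcases hb with rfl | rfl <;> simp [liftX, Prod.ext_iff] <;> omega

theorem liftY_apply_of_mem_horizNbrs (ha : a ∈ horizNbrs u) : liftY t h v n u a = h u a := by
  rcases ha with rfl | rfl <;> simp [liftY, Prod.ext_iff] <;> omega

theorem resolved_liftX_self (hn : ∀ b ∈ vertNbrs v, |h v b| < n) :
    Resolved t (liftX t h v n) v := by
  rw [resolved_iff_forall_correctOrder]
  intro a ha b hb
  rw [liftX_apply_self ha, liftX_apply_of_mem_vertNbrs hb]
  exact correctOrder_ite_left_of_abs_lt _ (hn b hb)

theorem resolved_liftY_self (hn : ∀ a ∈ horizNbrs v, |h v a| < n) :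
    Resolved t (liftY t h v n) v := by
  rw [resolved_iff_forall_correctOrder]
  intro a ha b hb
  rw [liftY_apply_self hb, liftY_apply_of_mem_horizNbrs ha]
  exact correctOrder_ite_right_of_abs_lt _ (hn a ha)

theorem Resolved.liftX (hres : Resolved t h u) (htype : t u = t v)
    (hn : ∀ b ∈ vertNbrs u, |h u b| < n) : Resolved t (liftX t h v n) u := by
  rw [resolved_iff_forall_correctOrder] at hres ⊢
  intro a ha b hb
  rw [liftX_apply_of_mem_vertNbrs hb]
  rcases liftX_apply_eq_or t h v n u a with ha' | ha' <;> rw [ha']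
  · exact hres a ha b hb
  · exact htype ▸ correctOrder_ite_left_of_abs_lt _ (hn b hb)

theorem Resolved.liftY (hres : Resolved t h u) (htype : t u = t v)
    (hn : ∀ a ∈ horizNbrs u, |h u a| < n) : Resolved t (liftY t h v n) u := by
  rw [resolved_iff_forall_correctOrder] at hres ⊢
  intro a ha b hb
  rw [liftY_apply_of_mem_horizNbrs ha]
  rcases liftY_apply_eq_or t h v n u b with hb' | hb' <;> rw [hb']
  · exact hres a ha b hb
  · exact htype ▸ correctOrder_ite_right_of_abs_lt _ (hn a ha)

end Lift

theorem eventually_abs_lt_of_finite {α : Type*} (f : α → ℤ) {s : Set α} (hs : s.Finite) :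
    ∀ᶠ n in Filter.atTop, ∀ p ∈ s, |f p| < n :=
  (Filter.eventually_all_finite hs).mpr fun _ _ => Filter.eventually_gt_atTop _

theorem lift_compatible_of_same_type_general
    (t : ℤ × ℤ → Bool) (v w : ℤ × ℤ)
    (htype : t v = t w)
    (h : ℤ × ℤ → ℤ × ℤ → ℤ)
    (hres : Resolved t h w) :
    ∃ N : ℤ, ∀ n : ℤ, N ≤ n →
      (Resolved t (liftX t h v n) v ∧ Resolved t (liftX t h v n) w) ∧
      (Resolved t (liftY t h v n) v ∧ Resolved t (liftY t h v n) w) := by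
  refine Filter.eventually_atTop.mp ?_
  filter_upwards [eventually_abs_lt_of_finite (h v) (vertNbrs_finite v),
    eventually_abs_lt_of_finite (h w) (vertNbrs_finite w),
    eventually_abs_lt_of_finite (h v) (horizNbrs_finite v),
    eventually_abs_lt_of_finite (h w) (horizNbrs_finite w)] with n hv hw hv' hw'
  exact ⟨⟨resolved_liftX_self hv, hres.liftX htype.symm hw⟩,
    ⟨resolved_liftY_self hv', hres.liftY htype.symm hw'⟩⟩

/-- Observation (1): if `v` and `w` are adjacent crossings of the same type and
`w` is resolved with respect to `h`, then every sufficiently large lift at `v`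
(horizontal or vertical, in the appropriate direction) resolves `v` and leaves
`w` resolved. -/
theorem lift_compatible_of_same_type
    (X : Set (ℤ × ℤ)) (t : ℤ × ℤ → Bool) (v w : ℤ × ℤ)
    (hv : v ∈ X) (hw : w ∈ X) (hadj : Adjacent v w) (htype : t v = t w)
    (h : ℤ × ℤ → ℤ × ℤ → ℤ) (hsym : ∀ p q, h p q = h q p)
    (hres : Resolved t h w) :
    ∃ N : ℤ, ∀ n : ℤ, N ≤ n →
      (Resolved t (liftX t h v n) v ∧ Resolved t (liftX t h v n) w) ∧
      (Resolved t (liftY t h v n) v ∧ Resolved t (liftY t h v n) w) :=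
  lift_compatible_of_same_type_general t v w htype h hres
end
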